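/- Let K be a convex body in ℝ². Then the closure of the set {x ∈ ℝ² : per(K ∩ (K + x)) ≠ 0} equals the difference body K − K = {a − b : a, b ∈ K}. (Theorem 3.1(III) for the Euclidean perimeter: the support of the perimeter-covariogram of K is the difference body of K.) -/

import Mathlib

/-
For `a, b ∈ int K` the lens `K ∩ (K + (a - b))` is a convex body, so its perimeter is positive
and finite; off `K - K` the lens is empty. Since `K ⊆ closure (int K)`, the closure of
`int K - int K` is `K - K`.

Positivity: in dimension `≥ 2` a nonzero functional `f` kills some `v ≠ 0`, and each line in
direction `v` through a compact `C` meets `∂C`, so `f (∂C) = f C` contains an open interval.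
Finiteness: the nearest-point map onto `C` is `1`-Lipschitz and maps a large circle onto `∂C`
(push each boundary point out along a supporting normal), and circles have finite length.
-/

open MeasureTheory Set
open scoped Pointwise

/-- Euclidean perimeter of a planar set: one-dimensional Hausdorff measure of its frontier. -/
noncomputable def per (A : Set (EuclideanSpace ℝ (Fin 2))) : ℝ :=
  (μH[1] (frontier A)).toReal

open Metric Module Real
open scoped RealInnerProductSpace

section Normed

variable {E : Type*} [NormedAddCommGroup E] [NormedSpace ℝ E]

theorem exists_nonneg_norm_add_smul_eq {y u : E} {R : ℝ} (hy : ‖y‖ ≤ R) (hu : u ≠ 0) :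
    ∃ t : ℝ, 0 ≤ t ∧ ‖y + t • u‖ = R := by
  set T := (R + ‖y‖) / ‖u‖
  have hT : 0 ≤ T := div_nonneg (by linarith [norm_nonneg y]) (norm_nonneg u)
  have hTu : ‖T • u‖ = R + ‖y‖ := by
    rw [norm_smul, Real.norm_of_nonneg hT, div_mul_cancel₀ _ (norm_ne_zero_iff.2 hu)]
  have hfar : R ≤ ‖y + T • u‖ := by
    have := norm_sub_le (y + T • u) y
    rw [add_sub_cancel_left, hTu] at this
    linarith
  have hcont : Continuous fun t : ℝ => ‖y + t • u‖ := by fun_prop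
  obtain ⟨t, ht, hteq⟩ :=
    intermediate_value_Icc hT hcont.continuousOn ⟨by simpa using hy, hfar⟩
  exact ⟨t, ht.1, hteq⟩

theorem IsCompact.exists_add_smul_mem_frontier {C : Set E} (hC : IsCompact C) {z v : E}
    (hz : z ∈ C) (hv : v ≠ 0) : ∃ t : ℝ, z + t • v ∈ frontier C := by
  have hline : Continuous fun t : ℝ => z + t • v := by fun_prop
  obtain ⟨R, hR⟩ := hC.isBounded.exists_norm_le
  obtain ⟨t, -, ht⟩ := exists_nonneg_norm_add_smul_eq (le_max_left ‖z‖ (R + 1)) hv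
  have hout : z + t • v ∉ C := fun h => by linarith [hR _ h, le_max_right ‖z‖ (R + 1)]
  obtain ⟨s, hs⟩ := nonempty_frontier_iff (s := (fun t : ℝ => z + t • v) ⁻¹' C) |>.2
    ⟨⟨0, by simpa using hz⟩, ne_univ_iff_exists_notMem _ |>.2 ⟨t, hout⟩⟩
  exact ⟨s, hline.frontier_preimage_subset C hs⟩

theorem LinearMap.image_frontier_eq_image {F : Type*} [AddCommGroup F] [Module ℝ F]
    (f : E →ₗ[ℝ] F) {v : E} (hv : v ≠ 0) (hfv : f v = 0) {C : Set E} (hC : IsCompact C) :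
    f '' frontier C = f '' C := by
  refine (image_mono hC.isClosed.frontier_subset).antisymm ?_
  rintro _ ⟨z, hz, rfl⟩
  obtain ⟨t, ht⟩ := hC.exists_add_smul_mem_frontier hz hv
  exact ⟨z + t • v, ht, by simp [hfv]⟩

theorem hausdorffMeasure_one_frontier_ne_zero [MeasurableSpace E] [BorelSpace E]
    (hE : 2 ≤ finrank ℝ E) {C : Set E} (hC : IsCompact C) (hint : (interior C).Nonempty) :
    μH[1] (frontier C) ≠ 0 := by
  have : FiniteDimensional ℝ E := Module.finite_of_finrank_pos (by omega)
  have : Nontrivial E := Module.nontrivial_of_finrank_pos (R := ℝ) (by omega)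
  obtain ⟨x, hx⟩ := exists_ne (0 : E)
  obtain ⟨f, hfx⟩ := SeparatingDual.exists_ne_zero (R := ℝ) hx
  have hf : (f : E →ₗ[ℝ] ℝ) ≠ 0 := fun h => hfx (by simpa using LinearMap.congr_fun h x)
  obtain ⟨v, hv, hv0⟩ := Submodule.exists_mem_ne_zero_of_ne_bot <|
    LinearMap.ker_ne_bot_of_finrank_lt (f := (f : E →ₗ[ℝ] ℝ)) (by rw [finrank_self]; omega)
  have hopen : IsOpen (f '' interior C) :=
    LinearMap.isOpenMap_of_finiteDimensional _ (LinearMap.surjective hf) _ isOpen_interior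
  have hpos : μH[1] (f '' C) ≠ 0 := by
    rw [hausdorffMeasure_real]
    exact ne_bot_of_le_ne_bot (hopen.measure_ne_zero volume (hint.image f))
      (measure_mono (image_mono interior_subset))
  intro h0
  have hle := f.lipschitz.hausdorffMeasure_image_le zero_le_one (frontier C)
  rw [h0, mul_zero] at hle
  have hfrontier : f '' frontier C = f '' C :=
    (f : E →ₗ[ℝ] ℝ).image_frontier_eq_image hv0 hv hC
  rw [← hfrontier] at hpos
  exact hpos (le_zero_iff.1 hle)

end Normed

section InnerProduct

variable {F : Type*} [NormedAddCommGroup F] [InnerProductSpace ℝ F]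

/-- `h` and `h'` say that `y` and `y'` are the nearest points of `C` to `z` and `z'`; the
conclusion is the firm nonexpansiveness of the nearest-point map. -/
theorem norm_sub_sq_le_inner_of_forall_inner_sub_nonpos {C : Set F} {z z' y y' : F}
    (hy : y ∈ C) (hy' : y' ∈ C) (h : ∀ c ∈ C, ⟪z - y, c - y⟫ ≤ 0)
    (h' : ∀ c ∈ C, ⟪z' - y', c - y'⟫ ≤ 0) : ‖y - y'‖ ^ 2 ≤ ⟪z - z', y - y'⟫ := by
  have h₁ := h y' hy'
  have h₂ := h' y hy
  rw [← real_inner_self_eq_norm_sq]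
  simp only [inner_sub_left, inner_sub_right, real_inner_comm] at h₁ h₂ ⊢
  linarith

theorem Convex.exists_forall_inner_sub_nonpos [CompleteSpace F] {C : Set F} (hC : Convex ℝ C)
    (hint : (interior C).Nonempty) {y : F} (hy : y ∉ interior C) :
    ∃ u ≠ 0, ∀ c ∈ C, ⟪u, c - y⟫ ≤ 0 := by
  obtain ⟨f, hf⟩ := geometric_hahn_banach_open_point hC.interior isOpen_interior hy
  have hfC : ∀ c ∈ closure C, f c ≤ f y := by
    rw [← hC.closure_interior_eq_closure_of_nonempty_interior hint]
    exact fun c hc => closure_minimal (fun a ha => (hf a ha).le)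
      (isClosed_le f.continuous continuous_const) hc
  set u := (InnerProductSpace.toDual ℝ F).symm f
  have hu : ∀ x, ⟪u, x⟫ = f x := fun x => InnerProductSpace.toDual_symm_apply
  refine ⟨u, fun hu0 => ?_, fun c hc => ?_⟩
  · obtain ⟨a, ha⟩ := hint
    have := hf a ha
    rw [← hu, ← hu, hu0, inner_zero_left, inner_zero_left] at this
    exact lt_irrefl 0 this
  · rw [inner_sub_right, hu, hu]
    linarith [hfC c (subset_closure hc)]

theorem hausdorffMeasure_frontier_le_sphere [CompleteSpace F] [MeasurableSpace F] [BorelSpace F]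
    {C : Set F} (hCc : IsClosed C) (hCv : Convex ℝ C) (hint : (interior C).Nonempty) {R : ℝ}
    (hR : C ⊆ closedBall 0 R) {d : ℝ} (hd : 0 ≤ d) :
    μH[d] (frontier C) ≤ μH[d] (sphere (0 : F) R) := by
  have hnearest : ∀ x, ∃ p ∈ C, ∀ c ∈ C, ⟪x - p, c - p⟫ ≤ 0 := fun x => by
    obtain ⟨p, hp, hmin⟩ := exists_norm_eq_iInf_of_complete_convex
      (hint.mono interior_subset) hCc.isComplete hCv x
    exact ⟨p, hp, (norm_eq_iInf_iff_real_inner_le_zero hCv hp).1 hmin⟩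
  choose P hPC hP using hnearest
  have hlip : LipschitzWith 1 P := LipschitzWith.of_dist_le_mul fun x x' => by
    have hfirm := norm_sub_sq_le_inner_of_forall_inner_sub_nonpos (hPC x) (hPC x') (hP x) (hP x')
    have hcs := real_inner_le_norm (x - x') (P x - P x')
    rw [NNReal.coe_one, one_mul, dist_eq_norm, dist_eq_norm]
    nlinarith [norm_nonneg (P x - P x'), norm_nonneg (x - x')]
  have hcover : frontier C ⊆ P '' sphere 0 R := by
    intro y hy
    have hyC : y ∈ C := hCc.frontier_subset hy
    obtain ⟨u, hu, hnormal⟩ := hCv.exists_forall_inner_sub_nonpos hint hy.2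
    obtain ⟨t, ht, hnorm⟩ := exists_nonneg_norm_add_smul_eq (mem_closedBall_zero_iff.1 (hR hyC)) hu
    refine ⟨y + t • u, mem_sphere_zero_iff_norm.2 hnorm, ?_⟩
    have hy_nearest : ∀ c ∈ C, ⟪y + t • u - y, c - y⟫ ≤ 0 := fun c hc => by
      rw [add_sub_cancel_left, real_inner_smul_left]
      exact mul_nonpos_of_nonneg_of_nonpos ht (hnormal c hc)
    have hfirm := norm_sub_sq_le_inner_of_forall_inner_sub_nonpos (hPC (y + t • u)) hyC
      (hP (y + t • u)) hy_nearest
    rw [sub_self, inner_zero_left] at hfirm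
    exact sub_eq_zero.1 (norm_eq_zero.1 ((sq_nonpos_iff _).1 hfirm))
  calc μH[d] (frontier C) ≤ μH[d] (P '' sphere 0 R) := measure_mono hcover
    _ ≤ μH[d] (sphere (0 : F) R) := by simpa using hlip.hausdorffMeasure_image_le hd (sphere 0 R)

theorem hausdorffMeasure_one_sphere_ne_top [MeasurableSpace F] [BorelSpace F]
    (hF : finrank ℝ F = 2) (x : F) (R : ℝ) : μH[1] (sphere x R) ≠ ⊤ := by
  have : FiniteDimensional ℝ F := Module.finite_of_finrank_eq_succ hF
  let e := Complex.isometryOfOrthonormal ((stdOrthonormalBasis ℝ F).reindex (finCongr hF))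
  have hcover : sphere x R ⊆ (e ∘ circleMap (e.symm x) R) '' Ioc 0 (2 * π) := by
    rw [image_comp, image_circleMap_Ioc, e.image_sphere, e.apply_symm_apply]
    intro y hy
    rwa [mem_sphere, abs_of_nonneg (dist_nonneg.trans_eq hy)]
  have hlip : LipschitzWith (Real.nnabs R) (e ∘ circleMap (e.symm x) R) := by
    simpa using e.isometry.lipschitz.comp (lipschitzWith_circleMap (e.symm x) R)
  refine ne_top_of_le_ne_top ?_
    ((measure_mono hcover).trans (hlip.hausdorffMeasure_image_le zero_le_one _))
  rw [hausdorffMeasure_real, Real.volume_Ioc, ENNReal.rpow_one]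
  exact ENNReal.mul_ne_top ENNReal.coe_ne_top ENNReal.ofReal_ne_top

theorem hausdorffMeasure_one_frontier_ne_top [MeasurableSpace F] [BorelSpace F]
    (hF : finrank ℝ F = 2) {C : Set F} (hC : IsCompact C) (hCv : Convex ℝ C)
    (hint : (interior C).Nonempty) : μH[1] (frontier C) ≠ ⊤ := by
  have : FiniteDimensional ℝ F := Module.finite_of_finrank_eq_succ hF
  have : CompleteSpace F := FiniteDimensional.complete ℝ F
  obtain ⟨R, hR⟩ := hC.isBounded.subset_closedBall 0
  exact ne_top_of_le_ne_top (hausdorffMeasure_one_sphere_ne_top hF 0 R)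
    (hausdorffMeasure_frontier_le_sphere hC.isClosed hCv hint hR zero_le_one)

end InnerProduct

theorem per_ne_zero {C : Set (EuclideanSpace ℝ (Fin 2))} (hC : IsCompact C) (hCv : Convex ℝ C)
    (hint : (interior C).Nonempty) : per C ≠ 0 :=
  ENNReal.toReal_ne_zero.2 ⟨hausdorffMeasure_one_frontier_ne_zero (by simp) hC hint,
    hausdorffMeasure_one_frontier_ne_top (by simp) hC hCv hint⟩

section Translate

variable {G : Type*} [AddCommGroup G]

theorem inter_image_add_right_nonempty_iff {K : Set G} {x : G} :
    (K ∩ (· + x) '' K).Nonempty ↔ x ∈ K - K := by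
  constructor
  · rintro ⟨_, hy, k, hk, rfl⟩
    exact ⟨k + x, hy, k, hk, add_sub_cancel_left k x⟩
  · rintro ⟨a, ha, b, hb, rfl⟩
    exact ⟨a, ha, b, hb, add_sub_cancel b a⟩

theorem mem_interior_inter_image_add_right [TopologicalSpace G] [IsTopologicalAddGroup G]
    {K : Set G} {a b : G} (ha : a ∈ interior K) (hb : b ∈ interior K) :
    a ∈ interior (K ∩ (· + (a - b)) '' K) := by
  rw [interior_inter]
  exact ⟨ha, (isOpenMap_add_right (a - b)).image_interior_subset K ⟨b, hb, add_sub_cancel b a⟩⟩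

end Translate

theorem Convex.sub_subset_closure_interior_sub {E : Type*} [AddCommGroup E] [Module ℝ E]
    [TopologicalSpace E] [IsTopologicalAddGroup E] [ContinuousSMul ℝ E] {K : Set E}
    (hK : Convex ℝ K) (hint : (interior K).Nonempty) :
    K - K ⊆ closure (interior K - interior K) := by
  have hKcl : K ⊆ closure (interior K) :=
    hK.closure_interior_eq_closure_of_nonempty_interior hint ▸ subset_closure
  rintro _ ⟨a, ha, b, hb, rfl⟩
  exact map_mem_closure₂ continuous_sub (hKcl ha) (hKcl hb) fun a ha b hb => sub_mem_sub ha hb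

theorem per_inter_image_add_right_eq_zero {K : Set (EuclideanSpace ℝ (Fin 2))}
    {x : EuclideanSpace ℝ (Fin 2)} (hx : x ∉ K - K) : per (K ∩ (· + x) '' K) = 0 := by
  rw [not_nonempty_iff_eq_empty.1 (mt inter_image_add_right_nonempty_iff.1 hx)]
  simp [per]

theorem per_inter_image_add_right_ne_zero {K : Set (EuclideanSpace ℝ (Fin 2))}
    (hKcp : IsCompact K) (hKcv : Convex ℝ K) {a b : EuclideanSpace ℝ (Fin 2)}
    (ha : a ∈ interior K) (hb : b ∈ interior K) : per (K ∩ (· + (a - b)) '' K) ≠ 0 := by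
  have hcompact : IsCompact ((· + (a - b)) '' K) := hKcp.image (continuous_add_const _)
  have hconvex : Convex ℝ ((· + (a - b)) '' K) := by
    rw [image_add_right]
    exact hKcv.translate_preimage_left _
  exact per_ne_zero (hKcp.inter_right hcompact.isClosed) (hKcv.inter hconvex)
    ⟨a, mem_interior_inter_image_add_right ha hb⟩

theorem support_perimeter_covariogram_eq_difference_body_general
    (K : Set (EuclideanSpace ℝ (Fin 2)))
    (hKcp : IsCompact K) (hKcv : Convex ℝ K)
    (hKint : (interior K).Nonempty) :
    closure {x : EuclideanSpace ℝ (Fin 2) | per (K ∩ ((· + x) '' K)) ≠ 0} = K - K := by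
  refine subset_antisymm (closure_minimal (fun x hx => ?_) ?_) ?_
  · by_contra hxK
    exact hx (per_inter_image_add_right_eq_zero hxK)
  · rw [sub_eq_add_neg]
    exact (hKcp.add hKcp.neg).isClosed
  · refine (hKcv.sub_subset_closure_interior_sub hKint).trans (closure_mono ?_)
    rintro _ ⟨a, ha, b, hb, rfl⟩
    exact per_inter_image_add_right_ne_zero hKcp hKcv ha hb

/-- The support of the perimeter-covariogram of a planar convex body `K` is the
difference body `K − K`. -/
theorem support_perimeter_covariogram_eq_difference_body
    (K : Set (EuclideanSpace ℝ (Fin 2)))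
    (hKne : K.Nonempty) (hKcp : IsCompact K) (hKcv : Convex ℝ K)
    (hKint : (interior K).Nonempty) :
    closure {x : EuclideanSpace ℝ (Fin 2) | per (K ∩ ((· + x) '' K)) ≠ 0} = K - K :=
  support_perimeter_covariogram_eq_difference_body_general K hKcp hKcv hKint
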